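/- arXiv:0910.2788 — 2 statements merged into one kernel-verified Lean document; each statement's English description precedes it below -/
import Mathlib

section
/- For every stopping time S, E[v(S)] = sup_{θ ∈ T_S} E[φ(θ)], where v(S) = ess sup_{θ ∈ T_S} E[φ(θ)|F_S]. -/
open MeasureTheory Filter ENNReal

variable {Ω : Type*}

/-- A stopping time of the filtration `ℱ` with values in `[0, T]` (an element of `T_0`). -/
def IsStoppingTimeIn {m : MeasurableSpace Ω} (ℱ : Filtration ℝ m) (T : ℝ)
    (τ : Ω → ℝ) : Prop :=
  IsStoppingTime ℱ (fun ω => (τ ω : WithTop ℝ)) ∧ ∀ ω, τ ω ∈ Set.Icc (0 : ℝ) T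

/-- `θ` belongs to `T_S`: a `[0,T]`-valued stopping time with `θ ≥ S` a.s. -/
def MemTS {m : MeasurableSpace Ω} (ℱ : Filtration ℝ m) (μ : Measure Ω) (T : ℝ)
    (S θ : Ω → ℝ) : Prop :=
  IsStoppingTimeIn ℱ T θ ∧ ∀ᵐ ω ∂μ, S ω ≤ θ ω

/-- An admissible family of nonnegative random variables indexed by stopping times:
`φ(τ)` is `F_τ`-measurable and `φ(τ) = φ(τ')` a.s. on `{τ = τ'}`. -/
def Admissible {m : MeasurableSpace Ω} (ℱ : Filtration ℝ m) (μ : Measure Ω) (T : ℝ)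
    (φ : (Ω → ℝ) → Ω → ℝ) : Prop :=
  (∀ τ (hτ : IsStoppingTimeIn ℱ T τ),
      Measurable[hτ.1.measurableSpace] (φ τ) ∧ ∀ ω, 0 ≤ φ τ ω) ∧
  (∀ τ τ', IsStoppingTimeIn ℱ T τ → IsStoppingTimeIn ℱ T τ' →
      ∀ᵐ ω ∂μ, τ ω = τ' ω → φ τ ω = φ τ' ω)

/-- `v` is an essential supremum of the family of random variables `s`:
`v` dominates every member a.s., and is a.s. below any other a.s. upper bound. -/
def IsEssSupOf {m : MeasurableSpace Ω} (μ : Measure Ω) (s : Set (Ω → ℝ))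
    (v : Ω → ℝ) : Prop :=
  (∀ f ∈ s, f ≤ᵐ[μ] v) ∧ ∀ g : Ω → ℝ, (∀ f ∈ s, f ≤ᵐ[μ] g) → v ≤ᵐ[μ] g

/-- The family `{E[φ(θ) | F_S] : θ ∈ T_S}`. -/
def valueSet {m : MeasurableSpace Ω} (ℱ : Filtration ℝ m) (μ : Measure Ω) (T : ℝ)
    (φ : (Ω → ℝ) → Ω → ℝ) (S : Ω → ℝ) (hS : IsStoppingTime ℱ (fun ω => (S ω : WithTop ℝ))) : Set (Ω → ℝ) :=
  {f | ∃ θ, MemTS ℱ μ T S θ ∧ f = μ[φ θ | hS.measurableSpace]}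

/-- `v` is the value function family of the reward family `φ`:
`v(S) = ess sup_{θ ∈ T_S} E[φ(θ) | F_S]`, chosen `F_S`-measurable. -/
def IsValueFam {m : MeasurableSpace Ω} (ℱ : Filtration ℝ m) (μ : Measure Ω) (T : ℝ)
    (φ v : (Ω → ℝ) → Ω → ℝ) : Prop :=
  ∀ S (hS : IsStoppingTimeIn ℱ T S),
    Measurable[hS.1.measurableSpace] (v S) ∧
    IsEssSupOf μ (valueSet ℱ μ T φ S hS.1) (v S)

/-- Right continuity in expectation along stopping times. -/
def RCEFam {m : MeasurableSpace Ω} (ℱ : Filtration ℝ m) (μ : Measure Ω) (T : ℝ)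
    (φ : (Ω → ℝ) → Ω → ℝ) : Prop :=
  ∀ θ (θn : ℕ → Ω → ℝ), IsStoppingTimeIn ℱ T θ →
    (∀ n, IsStoppingTimeIn ℱ T (θn n)) →
    (∀ᵐ ω ∂μ, Antitone (fun n => θn n ω) ∧
      Tendsto (fun n => θn n ω) atTop (nhds (θ ω))) →
    Tendsto (fun n => ∫ ω, φ (θn n) ω ∂μ) atTop (nhds (∫ ω, φ θ ω ∂μ))

/-- Left continuity in expectation along stopping times. -/
def LCEFam {m : MeasurableSpace Ω} (ℱ : Filtration ℝ m) (μ : Measure Ω) (T : ℝ)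
    (φ : (Ω → ℝ) → Ω → ℝ) : Prop :=
  ∀ θ (θn : ℕ → Ω → ℝ), IsStoppingTimeIn ℱ T θ →
    (∀ n, IsStoppingTimeIn ℱ T (θn n)) →
    (∀ᵐ ω ∂μ, Monotone (fun n => θn n ω) ∧
      Tendsto (fun n => θn n ω) atTop (nhds (θ ω))) →
    Tendsto (fun n => ∫ ω, φ (θn n) ω ∂μ) atTop (nhds (∫ ω, φ θ ω ∂μ))

/-- The integrability condition `v(0) = sup_{θ ∈ T_0} E[φ(θ)] < ∞`. -/
def BddReward {m : MeasurableSpace Ω} (ℱ : Filtration ℝ m) (μ : Measure Ω) (T : ℝ)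
    (φ : (Ω → ℝ) → Ω → ℝ) : Prop :=
  (⨆ θ : {θ : Ω → ℝ // IsStoppingTimeIn ℱ T θ},
      ∫⁻ ω, ENNReal.ofReal (φ θ.1 ω) ∂μ) < ⊤

/-- A supermartingale system: an admissible family `h` with
`E[h(θ) | F_{θ'}] ≤ h(θ')` a.s. whenever `θ ≥ θ'` a.s. -/
def SupermartSys {m : MeasurableSpace Ω} (ℱ : Filtration ℝ m) (μ : Measure Ω) (T : ℝ)
    (h : (Ω → ℝ) → Ω → ℝ) : Prop :=
  Admissible ℱ μ T h ∧
  ∀ θ θ' (hθ : IsStoppingTimeIn ℱ T θ) (hθ' : IsStoppingTimeIn ℱ T θ'),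
    (∀ᵐ ω ∂μ, θ' ω ≤ θ ω) →
    μ[h θ | hθ'.1.measurableSpace] ≤ᵐ[μ] h θ'

/-- `F_0` contains only sets of probability `0` or `1`. -/
def TrivialF0 {m : MeasurableSpace Ω} (ℱ : Filtration ℝ m) (μ : Measure Ω) : Prop :=
  ∀ A : Set Ω, MeasurableSet[ℱ 0] A → μ A = 0 ∨ μ A = 1

/-! The family `{E[φ(θ) | F_S] : θ ∈ T_S}` is directed upwards: pasting `θ₁` on the
`F_S`-measurable set `{E[φ(θ₂) | F_S] ≤ E[φ(θ₁) | F_S]}` and `θ₂` on its complement gives an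
element of `T_S` whose conditional reward is the maximum of the two. Its expectations are bounded
because `v(0)` is `F_0`-measurable, hence a.s. below a constant. Choose an a.s. increasing sequence
`f n` in the family with `E[f n] → M := sup_θ E[φ(θ)]`, and let `g` be its limit. For any
member `u`, a common upper bound `k n` of `u` and `f n` gives
`E[(u - g)⁺] ≤ E[k n - f n] ≤ M - E[f n] → 0`, so `g` is an a.s. upper bound of the family; hence `g = v(S)` a.s., and monotone convergence gives
`E[v(S)] = M`. -/

theorem DirectedOn.exists_seq_mem_rel_succ {α : Type*} {r : α → α → Prop} {s : Set α}
    (hs : DirectedOn r s) {a : ℕ → α} (ha : ∀ n, a n ∈ s) :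
    ∃ f : ℕ → α, (∀ n, f n ∈ s) ∧ (∀ n, r (f n) (f (n + 1))) ∧ ∀ n, r (a n) (f n) := by
  choose up hup_mem hup_left hup_right using hs
  let f : ℕ → s := fun n => Nat.rec (motive := fun _ => s) ⟨up _ (ha 0) _ (ha 0), hup_mem ..⟩
    (fun k x => ⟨up x x.2 (a (k + 1)) (ha (k + 1)), hup_mem ..⟩) n
  refine ⟨fun n => f n, fun n => (f n).2, fun n => hup_left .., fun n => ?_⟩
  cases n with
  | zero => exact hup_left ..
  | succ k => exact hup_right ..

section Integral

variable [MeasurableSpace Ω] {μ : Measure Ω}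

theorem MeasureTheory.integrable_of_tendsto_of_monotone {f : ℕ → Ω → ℝ} {F : Ω → ℝ} {C : ℝ}
    (hf : ∀ n, Integrable (f n) μ) (hmono : ∀ᵐ ω ∂μ, Monotone fun n => f n ω)
    (hF : ∀ᵐ ω ∂μ, Tendsto (fun n => f n ω) atTop (nhds (F ω)))
    (hC : ∀ n, ∫ ω, f n ω ∂μ ≤ C) : Integrable F μ := by
  have hFm : AEStronglyMeasurable F μ :=
    aestronglyMeasurable_of_tendsto_ae _ (fun n => (hf n).1) hF
  have hle : ∀ᵐ ω ∂μ, ∀ n, f 0 ω ≤ f n ω := hmono.mono fun ω h n => h (Nat.zero_le n)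
  suffices Integrable (F - f 0) μ by simpa using this.add (hf 0)
  have hnn : 0 ≤ᵐ[μ] F - f 0 := by
    filter_upwards [hmono, hF] with ω hm ht using sub_nonneg.2 (hm.ge_of_tendsto ht 0)
  refine ⟨hFm.sub (hf 0).1, (hasFiniteIntegral_iff_ofReal hnn).2 ?_⟩
  have hlim : Tendsto (fun n => ∫⁻ ω, ENNReal.ofReal (f n ω - f 0 ω) ∂μ) atTop
      (nhds (∫⁻ ω, ENNReal.ofReal ((F - f 0) ω) ∂μ)) := by
    refine lintegral_tendsto_of_tendsto_of_monotone
      (fun n => ((hf n).sub (hf 0)).aemeasurable.ennreal_ofReal) ?_ ?_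
    · filter_upwards [hmono] with ω h i j hij
      exact ENNReal.ofReal_le_ofReal (sub_le_sub_right (h hij) _)
    · filter_upwards [hF] with ω h
      exact ENNReal.tendsto_ofReal (h.sub_const _)
  have hbound : ∀ n, ∫⁻ ω, ENNReal.ofReal (f n ω - f 0 ω) ∂μ
      ≤ ENNReal.ofReal (C - ∫ ω, f 0 ω ∂μ) := by
    intro n
    rw [← ofReal_integral_eq_lintegral_ofReal (f := fun ω => f n ω - f 0 ω)
      ((hf n).sub (hf 0)) (hle.mono fun ω h => sub_nonneg.2 (h n)), integral_sub (hf n) (hf 0)]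
    exact ENNReal.ofReal_le_ofReal (sub_le_sub_right (hC n) _)
  exact (le_of_tendsto' hlim hbound).trans_lt ENNReal.ofReal_lt_top

variable {s : Set (Ω → ℝ)}

theorem MeasureTheory.exists_seq_mem_monotone_tendsto_sSup_integral (hne : s.Nonempty)
    (hdir : DirectedOn (· ≤ᵐ[μ] ·) s) (hint : ∀ f ∈ s, Integrable f μ)
    (hbdd : BddAbove ((fun f => ∫ ω, f ω ∂μ) '' s)) :
    ∃ f : ℕ → Ω → ℝ, (∀ n, f n ∈ s) ∧ (∀ᵐ ω ∂μ, Monotone fun n => f n ω) ∧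
      Tendsto (fun n => ∫ ω, f n ω ∂μ) atTop (nhds (sSup ((fun f => ∫ ω, f ω ∂μ) '' s))) := by
  obtain ⟨u, -, hu_lim, hu_mem⟩ := exists_seq_tendsto_sSup (hne.image _) hbdd
  choose a ha_mem ha_eq using hu_mem
  obtain ⟨f, hf_mem, hf_succ, haf⟩ := hdir.exists_seq_mem_rel_succ ha_mem
  refine ⟨f, hf_mem, (ae_all_iff.2 hf_succ).mono fun ω h => monotone_nat_of_le_succ h, ?_⟩
  refine tendsto_of_tendsto_of_tendsto_of_le_of_le hu_lim tendsto_const_nhds (fun n => ?_)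
    (fun n => le_csSup hbdd ⟨f n, hf_mem n, rfl⟩)
  rw [← ha_eq n]
  exact integral_mono_ae (hint _ (ha_mem n)) (hint _ (hf_mem n)) (haf n)

theorem DirectedOn.ae_le_of_tendsto_integral (hdir : DirectedOn (· ≤ᵐ[μ] ·) s)
    (hint : ∀ f ∈ s, Integrable f μ) {M : ℝ} (hM : ∀ f ∈ s, ∫ ω, f ω ∂μ ≤ M)
    {f : ℕ → Ω → ℝ} (hf_mem : ∀ n, f n ∈ s) (hmono : ∀ᵐ ω ∂μ, Monotone fun n => f n ω)
    (hlim : Tendsto (fun n => ∫ ω, f n ω ∂μ) atTop (nhds M)) {g : Ω → ℝ}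
    (hfg : ∀ᵐ ω ∂μ, Tendsto (fun n => f n ω) atTop (nhds (g ω))) :
    ∀ u ∈ s, u ≤ᵐ[μ] g := by
  intro u hu
  choose k hk_mem hfk huk using fun n => hdir _ (hf_mem n) _ hu
  have hle_g : ∀ᵐ ω ∂μ, ∀ n, f n ω ≤ g ω := by
    filter_upwards [hmono, hfg] with ω hm ht using fun n => hm.ge_of_tendsto ht n
  have hbound : ∀ n, ∫⁻ ω, ENNReal.ofReal (u ω - g ω) ∂μ
      ≤ ENNReal.ofReal (M - ∫ ω, f n ω ∂μ) := by
    intro n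
    have hkf : 0 ≤ᵐ[μ] fun ω => k n ω - f n ω := (hfk n).mono fun ω h => sub_nonneg.2 h
    calc ∫⁻ ω, ENNReal.ofReal (u ω - g ω) ∂μ
        ≤ ∫⁻ ω, ENNReal.ofReal (k n ω - f n ω) ∂μ := by
          refine lintegral_mono_ae ?_
          filter_upwards [hle_g, huk n] with ω hg hk
          exact ENNReal.ofReal_le_ofReal (by linarith [hg n])
      _ = ENNReal.ofReal (∫ ω, k n ω ∂μ - ∫ ω, f n ω ∂μ) := by
          rw [← integral_sub (hint _ (hk_mem n)) (hint _ (hf_mem n)),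
            ofReal_integral_eq_lintegral_ofReal (f := fun ω => k n ω - f n ω)
              ((hint _ (hk_mem n)).sub (hint _ (hf_mem n))) hkf]
      _ ≤ ENNReal.ofReal (M - ∫ ω, f n ω ∂μ) :=
          ENNReal.ofReal_le_ofReal (sub_le_sub_right (hM _ (hk_mem n)) _)
  have hzero : ∫⁻ ω, ENNReal.ofReal (u ω - g ω) ∂μ = 0 := by
    have hlim0 : Tendsto (fun n => ENNReal.ofReal (M - ∫ ω, f n ω ∂μ)) atTop (nhds 0) := by
      simpa using ENNReal.tendsto_ofReal (hlim.const_sub M)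
    exact le_antisymm (ge_of_tendsto hlim0 (Eventually.of_forall hbound)) bot_le
  have hgm : AEMeasurable g μ :=
    aemeasurable_of_tendsto_metrizable_ae' (fun n => (hint _ (hf_mem n)).aemeasurable) hfg
  filter_upwards [(lintegral_eq_zero_iff' ((hint u hu).aemeasurable.sub hgm).ennreal_ofReal).1
    hzero] with ω hω
  simpa [sub_nonpos] using hω

theorem IsEssSupOf.isLUB_integral {v : Ω → ℝ} (hv : IsEssSupOf μ s v) (hne : s.Nonempty)
    (hdir : DirectedOn (· ≤ᵐ[μ] ·) s) (hint : ∀ f ∈ s, Integrable f μ)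
    (hbdd : BddAbove ((fun f => ∫ ω, f ω ∂μ) '' s)) :
    IsLUB ((fun f => ∫ ω, f ω ∂μ) '' s) (∫ ω, v ω ∂μ) := by
  obtain ⟨f, hf_mem, hmono, hlim⟩ :=
    exists_seq_mem_monotone_tendsto_sSup_integral hne hdir hint hbdd
  have hfv : ∀ᵐ ω ∂μ, ∀ n, f n ω ≤ v ω := ae_all_iff.2 fun n => hv.1 _ (hf_mem n)
  have hfg : ∀ᵐ ω ∂μ, Tendsto (fun n => f n ω) atTop (nhds (⨆ n, f n ω)) := by
    filter_upwards [hmono, hfv] with ω hm hb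
    exact tendsto_atTop_ciSup hm ⟨v ω, Set.forall_mem_range.2 hb⟩
  have hgv : (fun ω => ⨆ n, f n ω) =ᵐ[μ] v := by
    refine EventuallyLE.antisymm ?_ (hv.2 _ (hdir.ae_le_of_tendsto_integral hint
      (fun f hf => le_csSup hbdd ⟨f, hf, rfl⟩) hf_mem hmono hlim hfg))
    filter_upwards [hfv] with ω hb using ciSup_le hb
  have hfv_lim : ∀ᵐ ω ∂μ, Tendsto (fun n => f n ω) atTop (nhds (v ω)) := by
    filter_upwards [hfg, hgv] with ω h he using he ▸ h
  have hv_int : Integrable v μ := integrable_of_tendsto_of_monotone (fun n => hint _ (hf_mem n))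
    hmono hfv_lim fun n => le_csSup hbdd ⟨f n, hf_mem n, rfl⟩
  rw [tendsto_nhds_unique (integral_tendsto_of_tendsto_of_monotone
    (fun n => hint _ (hf_mem n)) hv_int hmono hfv_lim) hlim]
  exact isLUB_csSup (hne.image _) hbdd

end Integral

theorem MeasureTheory.condExp_piecewise {m m0 : MeasurableSpace Ω} {μ : Measure Ω}
    {f g : Ω → ℝ} {A : Set Ω} [DecidablePred (· ∈ A)] (hm : m ≤ m0) (hf : Integrable f μ)
    (hg : Integrable g μ) (hA : MeasurableSet[m] A) :
    μ[A.piecewise f g | m] =ᵐ[μ] A.piecewise (μ[f | m]) (μ[g | m]) := by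
  rw [← Set.indicator_add_compl_eq_piecewise, ← Set.indicator_add_compl_eq_piecewise]
  exact (condExp_add (hf.indicator (hm _ hA)) (hg.indicator (hm _ hA.compl)) m).trans
    ((condExp_indicator hf hA).add (condExp_indicator hg hA.compl))

theorem MeasureTheory.exists_ae_le_const_of_measurable_of_trivial {m m0 : MeasurableSpace Ω}
    {μ : Measure Ω} [IsProbabilityMeasure μ] (hm : m ≤ m0)
    (htriv : ∀ A, MeasurableSet[m] A → μ A = 0 ∨ μ A = 1) {f : Ω → ℝ}
    (hf : Measurable[m] f) : ∃ c : ℝ, f ≤ᵐ[μ] fun _ => c := by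
  by_contra! h
  have hnull : ∀ n : ℕ, μ {ω | f ω ≤ n} = 0 := fun n =>
    (htriv _ (hf measurableSet_Iic)).resolve_right fun h1 =>
      h n (ae_iff.2 ((prob_compl_eq_zero_iff (hm _ (hf measurableSet_Iic))).2 h1))
  have hunion : (⋃ n : ℕ, {ω | f ω ≤ n}) = Set.univ :=
    Set.iUnion_eq_univ_iff.2 fun ω => exists_nat_ge (f ω)
  simpa [hunion] using measure_iUnion_null hnull

theorem MeasureTheory.IsStoppingTime.piecewise_of_measurableSet {ι : Type*} [Preorder ι]
    {m : MeasurableSpace Ω} {𝒢 : Filtration ι m} {σ τ η : Ω → WithTop ι} {A : Set Ω}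
    [DecidablePred (· ∈ A)] (hσ : IsStoppingTime 𝒢 σ) (hτ : IsStoppingTime 𝒢 τ)
    (hη : IsStoppingTime 𝒢 η) (hστ : σ ≤ τ) (hση : σ ≤ η)
    (hA : MeasurableSet[hσ.measurableSpace] A) : IsStoppingTime 𝒢 (A.piecewise τ η) := by
  intro n
  have hset : {ω | A.piecewise τ η ω ≤ n}
      = A ∩ {ω | σ ω ≤ n} ∩ {ω | τ ω ≤ n} ∪ Aᶜ ∩ {ω | σ ω ≤ n} ∩ {ω | η ω ≤ n} := by
    ext ω
    by_cases hω : ω ∈ A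
    · simpa [hω] using fun h => (hστ ω).trans h
    · simpa [hω] using fun h => (hση ω).trans h
  rw [hset]
  exact ((hA.2 n).inter (hτ n)).union ((hA.compl.2 n).inter (hη n))

section StoppingTimesIn

variable {m : MeasurableSpace Ω} {ℱ : Filtration ℝ m} {μ : Measure Ω} {T : ℝ}
  {φ : (Ω → ℝ) → Ω → ℝ} {S θ₁ θ₂ : Ω → ℝ}

theorem IsStoppingTimeIn.max (h₁ : IsStoppingTimeIn ℱ T θ₁) (h₂ : IsStoppingTimeIn ℱ T θ₂) :
    IsStoppingTimeIn ℱ T fun ω => max (θ₁ ω) (θ₂ ω) :=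
  ⟨by simpa only [WithTop.coe_max] using h₁.1.max h₂.1,
    fun ω => ⟨(h₁.2 ω).1.trans (le_max_left _ _), max_le (h₁.2 ω).2 (h₂.2 ω).2⟩⟩

theorem IsStoppingTimeIn.piecewise {A : Set Ω} [DecidablePred (· ∈ A)]
    (hS : IsStoppingTimeIn ℱ T S) (h₁ : IsStoppingTimeIn ℱ T θ₁) (h₂ : IsStoppingTimeIn ℱ T θ₂)
    (hS₁ : S ≤ θ₁) (hS₂ : S ≤ θ₂) (hA : MeasurableSet[hS.1.measurableSpace] A) :
    IsStoppingTimeIn ℱ T (A.piecewise θ₁ θ₂) := by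
  have hcoe : (fun ω => (A.piecewise θ₁ θ₂ ω : WithTop ℝ))
      = A.piecewise (fun ω => (θ₁ ω : WithTop ℝ)) fun ω => (θ₂ ω : WithTop ℝ) :=
    funext fun ω => by by_cases hω : ω ∈ A <;> simp [hω]
  refine ⟨hcoe ▸ hS.1.piecewise_of_measurableSet h₁.1 h₂.1 (fun ω => ?_) (fun ω => ?_) hA,
    fun ω => ?_⟩
  · exact WithTop.coe_le_coe.2 (hS₁ ω)
  · exact WithTop.coe_le_coe.2 (hS₂ ω)
  · by_cases hω : ω ∈ A
    · simpa [hω] using h₁.2 ω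
    · simpa [hω] using h₂.2 ω

theorem Admissible.exists_memTS_ae_eq_piecewise (hφ : Admissible ℱ μ T φ)
    (hS : IsStoppingTimeIn ℱ T S) (h₁ : MemTS ℱ μ T S θ₁) (h₂ : MemTS ℱ μ T S θ₂)
    {A : Set Ω} [DecidablePred (· ∈ A)] (hA : MeasurableSet[hS.1.measurableSpace] A) :
    ∃ θ, MemTS ℱ μ T S θ ∧ φ θ =ᵐ[μ] A.piecewise (φ θ₁) (φ θ₂) := by
  -- replacing `θᵢ` by `S ⊔ θᵢ` makes them `≥ S` everywhere, not just a.s.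
  set θ := A.piecewise (fun ω => max (S ω) (θ₁ ω)) fun ω => max (S ω) (θ₂ ω)
  have hθ : IsStoppingTimeIn ℱ T θ :=
    hS.piecewise (hS.max h₁.1) (hS.max h₂.1) (fun _ => le_max_left _ _)
      (fun _ => le_max_left _ _) hA
  have hSθ : ∀ ω, S ω ≤ θ ω := fun ω => by
    by_cases hω : ω ∈ A <;> simp [θ, hω]
  refine ⟨θ, ⟨hθ, ae_of_all _ hSθ⟩, ?_⟩
  filter_upwards [hφ.2 θ θ₁ hθ h₁.1, hφ.2 θ θ₂ hθ h₂.1, h₁.2, h₂.2] with ω e₁ e₂ s₁ s₂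
  by_cases hω : ω ∈ A
  · simpa [hω] using e₁ (by simp [θ, hω, s₁])
  · simpa [hω] using e₂ (by simp [θ, hω, s₂])

theorem Admissible.directedOn_valueSet (hφ : Admissible ℱ μ T φ) (hS : IsStoppingTimeIn ℱ T S) :
    DirectedOn (· ≤ᵐ[μ] ·) (valueSet ℱ μ T φ S hS.1) := by
  classical
  rintro _ ⟨θ₁, h₁, rfl⟩ _ ⟨θ₂, h₂, rfl⟩
  set 𝒢 := hS.1.measurableSpace
  have hnn : ∀ θ, MemTS ℱ μ T S θ → 0 ≤ᵐ[μ] μ[φ θ | 𝒢] := fun θ hθ =>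
    condExp_nonneg (ae_of_all _ (hφ.1 θ hθ.1).2)
  by_cases hi₁ : Integrable (φ θ₁) μ
  swap
  · refine ⟨_, ⟨θ₂, h₂, rfl⟩, ?_, ae_of_all _ fun _ => le_rfl⟩
    simpa [condExp_of_not_integrable hi₁] using hnn θ₂ h₂
  by_cases hi₂ : Integrable (φ θ₂) μ
  swap
  · refine ⟨_, ⟨θ₁, h₁, rfl⟩, ae_of_all _ fun _ => le_rfl, ?_⟩
    simpa [condExp_of_not_integrable hi₂] using hnn θ₁ h₁
  set A := {ω | μ[φ θ₂ | 𝒢] ω ≤ μ[φ θ₁ | 𝒢] ω}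
  have hA : MeasurableSet[𝒢] A :=
    measurableSet_le stronglyMeasurable_condExp.measurable stronglyMeasurable_condExp.measurable
  obtain ⟨θ, hθ, hφθ⟩ := hφ.exists_memTS_ae_eq_piecewise hS h₁ h₂ hA
  have hmax : A.piecewise (μ[φ θ₁ | 𝒢]) (μ[φ θ₂ | 𝒢]) = μ[φ θ₁ | 𝒢] ⊔ μ[φ θ₂ | 𝒢] := by
    ext ω
    by_cases hω : ω ∈ A
    · rw [Set.piecewise_eq_of_mem _ _ _ hω, Pi.sup_apply, sup_eq_left.2 hω]
    · rw [Set.piecewise_eq_of_notMem _ _ _ hω, Pi.sup_apply, sup_eq_right.2 (not_le.1 hω).le]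
  have hθ_eq : μ[φ θ | 𝒢] =ᵐ[μ] μ[φ θ₁ | 𝒢] ⊔ μ[φ θ₂ | 𝒢] :=
    hmax ▸ (condExp_congr_ae hφθ).trans (condExp_piecewise hS.1.measurableSpace_le hi₁ hi₂ hA)
  exact ⟨_, ⟨θ, hθ, rfl⟩, EventuallyLE.trans (.of_forall fun _ => le_sup_left) hθ_eq.symm.le,
    EventuallyLE.trans (.of_forall fun _ => le_sup_right) hθ_eq.symm.le⟩

end StoppingTimesIn

section ValueFamily

variable {m : MeasurableSpace Ω} {ℱ : Filtration ℝ m} {μ : Measure Ω} {T : ℝ}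
  {φ v : (Ω → ℝ) → Ω → ℝ}

theorem IsValueFam.exists_integral_le [IsProbabilityMeasure μ] (hv : IsValueFam ℱ μ T φ v)
    (hF0 : TrivialF0 ℱ μ) (hT : 0 ≤ T) : ∃ c, ∀ θ, IsStoppingTimeIn ℱ T θ → ∫ ω, φ θ ω ∂μ ≤ c := by
  have h0 : IsStoppingTimeIn ℱ T fun _ => 0 := ⟨isStoppingTime_const ℱ 0, fun _ => ⟨le_rfl, hT⟩⟩
  obtain ⟨hmeas, hsup, -⟩ := hv _ h0
  obtain ⟨c, hc⟩ := exists_ae_le_const_of_measurable_of_trivial (ℱ.le 0) hF0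
    (IsStoppingTime.measurableSpace_const ℱ (0 : ℝ) ▸ hmeas)
  refine ⟨c, fun θ hθ => ?_⟩
  calc ∫ ω, φ θ ω ∂μ = ∫ ω, μ[φ θ | h0.1.measurableSpace] ω ∂μ :=
        (integral_condExp h0.1.measurableSpace_le).symm
    _ ≤ ∫ _, c ∂μ := integral_mono_ae integrable_condExp (integrable_const c)
        ((hsup _ ⟨θ, ⟨hθ, ae_of_all _ fun ω => (hθ.2 ω).1⟩, rfl⟩).trans hc)
    _ = c := by simp

theorem integral_image_valueSet [IsFiniteMeasure μ] {S : Ω → ℝ}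
    (hS : IsStoppingTime ℱ fun ω => (S ω : WithTop ℝ)) :
    (fun f => ∫ ω, f ω ∂μ) '' valueSet ℱ μ T φ S hS
      = {x | ∃ θ, MemTS ℱ μ T S θ ∧ x = ∫ ω, φ θ ω ∂μ} := by
  ext x
  constructor
  · rintro ⟨_, ⟨θ, hθ, rfl⟩, rfl⟩
    exact ⟨θ, hθ, integral_condExp hS.measurableSpace_le⟩
  · rintro ⟨θ, hθ, rfl⟩
    exact ⟨_, ⟨θ, hθ, rfl⟩, integral_condExp hS.measurableSpace_le⟩

end ValueFamily

theorem expectation_value_eq_sup_general {m : MeasurableSpace Ω}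
    (ℱ : Filtration ℝ m) (μ : Measure Ω) [IsProbabilityMeasure μ]
    (T : ℝ) (hF0 : TrivialF0 ℱ μ)
    (φ : (Ω → ℝ) → Ω → ℝ) (hφ : Admissible ℱ μ T φ)
    (v : (Ω → ℝ) → Ω → ℝ) (hv : IsValueFam ℱ μ T φ v)
    (S : Ω → ℝ) (hS : IsStoppingTimeIn ℱ T S) :
    IsLUB {x : ℝ | ∃ θ, MemTS ℱ μ T S θ ∧ x = ∫ ω, φ θ ω ∂μ}
      (∫ ω, v S ω ∂μ) := by
  obtain ⟨ω₀⟩ := nonempty_of_isProbabilityMeasure μ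
  obtain ⟨c, hc⟩ := hv.exists_integral_le hF0 ((hS.2 ω₀).1.trans (hS.2 ω₀).2)
  have hbdd : BddAbove {x : ℝ | ∃ θ, MemTS ℱ μ T S θ ∧ x = ∫ ω, φ θ ω ∂μ} := by
    refine ⟨c, ?_⟩
    rintro _ ⟨θ, hθ, rfl⟩
    exact hc θ hθ.1
  rw [← integral_image_valueSet hS.1] at hbdd ⊢
  exact (hv S hS).2.isLUB_integral ⟨_, S, ⟨hS, ae_of_all _ fun _ => le_rfl⟩, rfl⟩
    (hφ.directedOn_valueSet hS) (fun _ ⟨_, _, hf⟩ => hf ▸ integrable_condExp) hbdd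

/-- **Remark 1.5, equation (4).** `E[v(S)] = sup_{θ ∈ T_S} E[φ(θ)]`. -/
theorem expectation_value_eq_sup {m : MeasurableSpace Ω}
    (ℱ : Filtration ℝ m) (μ : Measure Ω) [IsProbabilityMeasure μ]
    (T : ℝ) (hT : 0 < T) (hF0 : TrivialF0 ℱ μ)
    (φ : (Ω → ℝ) → Ω → ℝ) (hφ : Admissible ℱ μ T φ)
    (v : (Ω → ℝ) → Ω → ℝ) (hv : IsValueFam ℱ μ T φ v)
    (S : Ω → ℝ) (hS : IsStoppingTimeIn ℱ T S) :
    IsLUB {x : ℝ | ∃ θ, MemTS ℱ μ T S θ ∧ x = ∫ ω, φ θ ω ∂μ}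
      (∫ ω, v S ω ∂μ) :=
  expectation_value_eq_sup_general ℱ μ T hF0 φ hφ v hv S hS
end

section
/- Under the hypotheses ensuring existence of minimal optimal stopping times, the map S ↦ θ*(S) is left-continuous along stopping times: if S_n ↑ S a.s., then θ*(S_n) ↑ θ*(S) a.s., where θ*(S) = ess inf{θ ∈ T_S : v(θ) = φ(θ) a.s.}. -/
open MeasureTheory Filter ENNReal

variable {Ω : Type*}

/-!
Write `τₙ = θ*(Sₙ)`. Since the ess inf defining `θ*` is taken over a set of times that shrinks as
`S` grows, `τₙ` increases and stays below `θ*(S)`; its limit `θ̂` is a stopping time in `T_S`.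
The optimal time `θ*(θ̂)` lies in every `T_{Sₙ}`, so `E[v(θ̂)] ≤ E[φ(τₙ)]`, and left
continuity in expectation gives `E[v(θ̂)] ≤ E[φ(θ̂)]`. As `φ(θ̂) ≤ v(θ̂)`, this forces
`v(θ̂) = φ(θ̂)` a.s., so `θ̂` competes in the ess inf defining `θ*(S)` and `θ*(S) ≤ θ̂`.
-/

section OptimalStopping

variable {m : MeasurableSpace Ω} {ℱ : Filtration ℝ m} {μ : Measure Ω} {T : ℝ}
  {φ v : (Ω → ℝ) → Ω → ℝ}

theorem Admissible.integrable (hφ : Admissible ℱ μ T φ) (hbdd : BddReward ℱ μ T φ)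
    {θ : Ω → ℝ} (hθ : IsStoppingTimeIn ℱ T θ) : Integrable (φ θ) μ := by
  refine ⟨((hφ.1 θ hθ).1.mono hθ.1.measurableSpace_le le_rfl).aestronglyMeasurable, ?_⟩
  calc ∫⁻ ω, ‖φ θ ω‖ₑ ∂μ = ∫⁻ ω, ENNReal.ofReal (φ θ ω) ∂μ :=
        lintegral_congr fun ω => Real.enorm_eq_ofReal ((hφ.1 θ hθ).2 ω)
    _ ≤ ⨆ τ : {τ : Ω → ℝ // IsStoppingTimeIn ℱ T τ}, ∫⁻ ω, ENNReal.ofReal (φ τ.1 ω) ∂μ :=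
        le_iSup (fun τ : {τ : Ω → ℝ // IsStoppingTimeIn ℱ T τ} =>
          ∫⁻ ω, ENNReal.ofReal (φ τ.1 ω) ∂μ) ⟨θ, hθ⟩
    _ < ⊤ := hbdd

theorem IsStoppingTimeIn.bddAbove_range {τ : ℕ → Ω → ℝ}
    (hτ : ∀ n, IsStoppingTimeIn ℱ T (τ n)) (ω : Ω) : BddAbove (Set.range fun n => τ n ω) :=
  ⟨T, by rintro _ ⟨n, rfl⟩; exact ((hτ n).2 ω).2⟩

theorem IsStoppingTimeIn.iSup {τ : ℕ → Ω → ℝ} (hτ : ∀ n, IsStoppingTimeIn ℱ T (τ n)) :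
    IsStoppingTimeIn ℱ T fun ω => ⨆ n, τ n ω := by
  have hbdd := IsStoppingTimeIn.bddAbove_range hτ
  refine ⟨fun t => ?_, fun ω => ⟨((hτ 0).2 ω).1.trans (le_ciSup (hbdd ω) 0),
    ciSup_le fun n => ((hτ n).2 ω).2⟩⟩
  have hset : {ω | (((⨆ n, τ n ω : ℝ)) : WithTop ℝ) ≤ (t : WithTop ℝ)} =
      ⋂ n, {ω | ((τ n ω : ℝ) : WithTop ℝ) ≤ (t : WithTop ℝ)} := by
    ext ω
    simp only [Set.mem_iInter, Set.mem_ofPred_eq, WithTop.coe_le_coe]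
    exact ciSup_le_iff (hbdd ω)
  exact hset ▸ MeasurableSet.iInter fun n => (hτ n).1 t

def IsEssInfOf (μ : Measure Ω) (s : Set (Ω → ℝ)) (θ : Ω → ℝ) : Prop :=
  (∀ f ∈ s, θ ≤ᵐ[μ] f) ∧ ∀ g : Ω → ℝ, (∀ f ∈ s, g ≤ᵐ[μ] f) → g ≤ᵐ[μ] θ

theorem MemTS.of_ae_le {S₁ S₂ θ : Ω → ℝ} (hθ : MemTS ℱ μ T S₂ θ) (hS : S₁ ≤ᵐ[μ] S₂) :
    MemTS ℱ μ T S₁ θ :=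
  ⟨hθ.1, by filter_upwards [hS, hθ.2] with ω h₁ h₂ using h₁.trans h₂⟩

theorem IsEssInfOf.ae_le_of_ae_le {P : (Ω → ℝ) → Prop} {S₁ S₂ θ₁ θ₂ : Ω → ℝ}
    (h₁ : IsEssInfOf μ {θ | MemTS ℱ μ T S₁ θ ∧ P θ} θ₁)
    (h₂ : IsEssInfOf μ {θ | MemTS ℱ μ T S₂ θ ∧ P θ} θ₂) (hS : S₁ ≤ᵐ[μ] S₂) : θ₁ ≤ᵐ[μ] θ₂ :=
  h₂.2 θ₁ fun θ hθ => h₁.1 θ ⟨hθ.1.of_ae_le hS, hθ.2⟩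

theorem IsValueFam.reward_ae_le [IsFiniteMeasure μ] (hv : IsValueFam ℱ μ T φ v)
    (hφ : Admissible ℱ μ T φ) {θ : Ω → ℝ} (hθ : IsStoppingTimeIn ℱ T θ)
    (hint : Integrable (φ θ) μ) : φ θ ≤ᵐ[μ] v θ := by
  have h := (hv θ hθ).2.1 _ ⟨θ, ⟨hθ, ae_of_all _ fun _ => le_rfl⟩, rfl⟩
  rwa [condExp_of_stronglyMeasurable hθ.1.measurableSpace_le
    (hφ.1 θ hθ).1.stronglyMeasurable hint] at h

theorem IsValueFam.integral_le_of_optimal [IsFiniteMeasure μ] (hv : IsValueFam ℱ μ T φ v)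
    {S θ θ₀ : Ω → ℝ} (hS : IsStoppingTimeIn ℱ T S) (hθ : MemTS ℱ μ T S θ)
    (hθ₀ : v S =ᵐ[μ] μ[φ θ₀ | hS.1.measurableSpace]) :
    ∫ ω, φ θ ω ∂μ ≤ ∫ ω, φ θ₀ ω ∂μ :=
  calc ∫ ω, φ θ ω ∂μ = ∫ ω, μ[φ θ | hS.1.measurableSpace] ω ∂μ :=
        (integral_condExp hS.1.measurableSpace_le).symm
    _ ≤ ∫ ω, v S ω ∂μ := integral_mono_ae integrable_condExp
        (integrable_condExp.congr hθ₀.symm) ((hv S hS).2.1 _ ⟨θ, hθ, rfl⟩)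
    _ = ∫ ω, φ θ₀ ω ∂μ := by
        rw [integral_congr_ae hθ₀, integral_condExp hS.1.measurableSpace_le]

theorem IsValueFam.ae_eq_reward_of_tendsto [IsFiniteMeasure μ] (hv : IsValueFam ℱ μ T φ v)
    (hφ : Admissible ℱ μ T φ) (hbdd : BddReward ℱ μ T φ) (hlce : LCEFam ℱ μ T φ)
    {Sn τ : ℕ → Ω → ℝ} {θ σ : Ω → ℝ} (hSn : ∀ n, IsStoppingTimeIn ℱ T (Sn n))
    (hτ : ∀ n, MemTS ℱ μ T (Sn n) (τ n))
    (hτopt : ∀ n, v (Sn n) =ᵐ[μ] μ[φ (τ n) | (hSn n).1.measurableSpace])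
    (hθ : IsStoppingTimeIn ℱ T θ)
    (hτθ : ∀ᵐ ω ∂μ, Monotone (fun n => τ n ω) ∧ Tendsto (fun n => τ n ω) atTop (nhds (θ ω)))
    (hσ : MemTS ℱ μ T θ σ) (hσopt : v θ =ᵐ[μ] μ[φ σ | hθ.1.measurableSpace]) :
    v θ =ᵐ[μ] φ θ := by
  have hσn : ∀ n, MemTS ℱ μ T (Sn n) σ := fun n => hσ.of_ae_le <| by
    filter_upwards [(hτ n).2, hτθ] with ω h₁ h₂ using h₁.trans (h₂.1.ge_of_tendsto h₂.2 n)
  have hvθ : ∫ ω, v θ ω ∂μ = ∫ ω, φ σ ω ∂μ := by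
    rw [integral_congr_ae hσopt, integral_condExp hθ.1.measurableSpace_le]
  have hle : ∫ ω, v θ ω ∂μ ≤ ∫ ω, φ θ ω ∂μ :=
    ge_of_tendsto (hlce θ τ hθ (fun n => (hτ n).1) hτθ) <| Eventually.of_forall fun n =>
      hvθ ▸ hv.integral_le_of_optimal (hSn n) (hσn n) (hτopt n)
  have hint := hφ.integrable hbdd hθ
  have hφv := hv.reward_ae_le hφ hθ hint
  exact ((integral_eq_iff_of_ae_le hint (integrable_condExp.congr hσopt.symm) hφv).1
    (le_antisymm (integral_mono_ae hint (integrable_condExp.congr hσopt.symm) hφv) hle)).symm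

end OptimalStopping

theorem minimal_optimal_left_continuous_general {m : MeasurableSpace Ω}
    (ℱ : Filtration ℝ m) (μ : Measure Ω) [IsProbabilityMeasure μ]
    (T : ℝ)
    (φ : (Ω → ℝ) → Ω → ℝ) (hφ : Admissible ℱ μ T φ)
    (hlce : LCEFam ℱ μ T φ)
    (hbdd : BddReward ℱ μ T φ)
    (v : (Ω → ℝ) → Ω → ℝ) (hv : IsValueFam ℱ μ T φ v)
    (θstar : (Ω → ℝ) → Ω → ℝ)
    -- for each `S`, `θstar S` is the essential infimum of
    -- `{θ ∈ T_S : v(θ) = φ(θ) a.s.}` and is optimal for `v(S)`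
    (hθstar : ∀ S (hS : IsStoppingTimeIn ℱ T S),
      MemTS ℱ μ T S (θstar S) ∧
      (∀ θ, MemTS ℱ μ T S θ → v θ =ᵐ[μ] φ θ → θstar S ≤ᵐ[μ] θ) ∧
      (∀ g : Ω → ℝ, (∀ θ, MemTS ℱ μ T S θ → v θ =ᵐ[μ] φ θ → g ≤ᵐ[μ] θ) →
        g ≤ᵐ[μ] θstar S) ∧
      v S =ᵐ[μ] μ[φ (θstar S) | hS.1.measurableSpace]) :
    ∀ S (Sn : ℕ → Ω → ℝ), IsStoppingTimeIn ℱ T S →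
      (∀ n, IsStoppingTimeIn ℱ T (Sn n)) →
      (∀ᵐ ω ∂μ, Monotone (fun n => Sn n ω) ∧
        Tendsto (fun n => Sn n ω) atTop (nhds (S ω))) →
      ∀ᵐ ω ∂μ, Monotone (fun n => θstar (Sn n) ω) ∧
        Tendsto (fun n => θstar (Sn n) ω) atTop (nhds (θstar S ω)) := by
  intro S Sn hS hSn hconv
  have hinf : ∀ S, IsStoppingTimeIn ℱ T S →
      IsEssInfOf μ {θ | MemTS ℱ μ T S θ ∧ v θ =ᵐ[μ] φ θ} (θstar S) := fun S hS =>
    ⟨fun θ hθ => (hθstar S hS).2.1 θ hθ.1 hθ.2,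
      fun g hg => (hθstar S hS).2.2.1 g fun θ h₁ h₂ => hg θ ⟨h₁, h₂⟩⟩
  set τ : ℕ → Ω → ℝ := fun n => θstar (Sn n)
  have hτS : ∀ n, τ n ≤ᵐ[μ] θstar S := fun n =>
    (hinf _ (hSn n)).ae_le_of_ae_le (hinf S hS) <| by
      filter_upwards [hconv] with ω h using h.1.ge_of_tendsto h.2 n
  have hτmono : ∀ᵐ ω ∂μ, Monotone fun n => τ n ω := by
    filter_upwards [ae_all_iff.2 fun n => (hinf _ (hSn n)).ae_le_of_ae_le (hinf _ (hSn (n + 1)))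
      (by filter_upwards [hconv] with ω h using h.1 n.le_succ)] with ω h
    exact monotone_nat_of_le_succ h
  have hτT : ∀ n, IsStoppingTimeIn ℱ T (τ n) := fun n => (hθstar _ (hSn n)).1.1
  set θlim : Ω → ℝ := fun ω => ⨆ n, τ n ω
  have hθlim : IsStoppingTimeIn ℱ T θlim := IsStoppingTimeIn.iSup hτT
  have hτθlim : ∀ᵐ ω ∂μ, Monotone (fun n => τ n ω) ∧
      Tendsto (fun n => τ n ω) atTop (nhds (θlim ω)) := by
    filter_upwards [hτmono] with ω h
    exact ⟨h, tendsto_atTop_ciSup h (IsStoppingTimeIn.bddAbove_range hτT ω)⟩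
  have hSθlim : MemTS ℱ μ T S θlim := ⟨hθlim, by
    filter_upwards [hconv, hτθlim, ae_all_iff.2 fun n => (hθstar _ (hSn n)).1.2] with ω hS hτ hle
    exact le_of_tendsto_of_tendsto' hS.2 hτ.2 hle⟩
  have heq : v θlim =ᵐ[μ] φ θlim := hv.ae_eq_reward_of_tendsto hφ hbdd hlce hSn
    (fun n => (hθstar _ (hSn n)).1) (fun n => (hθstar _ (hSn n)).2.2.2) hθlim hτθlim
    (hθstar θlim hθlim).1 (hθstar θlim hθlim).2.2.2
  filter_upwards [hτθlim, (hinf S hS).1 θlim ⟨hSθlim, heq⟩, ae_all_iff.2 hτS] with ω hτ hSle hτle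
  exact ⟨hτ.1, le_antisymm (ciSup_le hτle) hSle ▸ hτ.2⟩

/-- **Remark 1.7.** The map `S ↦ θ*(S)` of minimal optimal stopping times is
left-continuous along stopping times: if `S_n ↑ S` a.s. then `θ*(S_n) ↑ θ*(S)` a.s. -/
theorem minimal_optimal_left_continuous {m : MeasurableSpace Ω}
    (ℱ : Filtration ℝ m) (μ : Measure Ω) [IsProbabilityMeasure μ]
    (T : ℝ) (hT : 0 < T) (hF0 : TrivialF0 ℱ μ)
    (φ : (Ω → ℝ) → Ω → ℝ) (hφ : Admissible ℱ μ T φ)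
    (hrce : RCEFam ℱ μ T φ) (hlce : LCEFam ℱ μ T φ)
    (hbdd : BddReward ℱ μ T φ)
    (v : (Ω → ℝ) → Ω → ℝ) (hv : IsValueFam ℱ μ T φ v)
    (θstar : (Ω → ℝ) → Ω → ℝ)
    -- for each `S`, `θstar S` is the essential infimum of
    -- `{θ ∈ T_S : v(θ) = φ(θ) a.s.}` and is optimal for `v(S)`
    (hθstar : ∀ S (hS : IsStoppingTimeIn ℱ T S),
      MemTS ℱ μ T S (θstar S) ∧
      (∀ θ, MemTS ℱ μ T S θ → v θ =ᵐ[μ] φ θ → θstar S ≤ᵐ[μ] θ) ∧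
      (∀ g : Ω → ℝ, (∀ θ, MemTS ℱ μ T S θ → v θ =ᵐ[μ] φ θ → g ≤ᵐ[μ] θ) →
        g ≤ᵐ[μ] θstar S) ∧
      v S =ᵐ[μ] μ[φ (θstar S) | hS.1.measurableSpace]) :
    ∀ S (Sn : ℕ → Ω → ℝ), IsStoppingTimeIn ℱ T S →
      (∀ n, IsStoppingTimeIn ℱ T (Sn n)) →
      (∀ᵐ ω ∂μ, Monotone (fun n => Sn n ω) ∧
        Tendsto (fun n => Sn n ω) atTop (nhds (S ω))) →
      ∀ᵐ ω ∂μ, Monotone (fun n => θstar (Sn n) ω) ∧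
        Tendsto (fun n => θstar (Sn n) ω) atTop (nhds (θstar S ω)) :=
  minimal_optimal_left_continuous_general ℱ μ T φ hφ hlce hbdd v hv θstar hθstar
end
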